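/- arXiv:1807.10326 — 2 statements merged into one kernel-verified Lean document; each statement's English description precedes it below -/
import Mathlib

section
/- Let f : M → Z be a continuous map between Hausdorff spaces, and let Ω_f = ⋂_{K ⊆ M compact} closure(f(M \ K)) be the Omega limit set of f. Then for any subset A of Z \ Ω_f, the restriction of f to M_A = f⁻¹(A), viewed as a map f_A : M_A → A, is a proper map (preimages of compact subsets of A are compact). -/
open Set

/-- For a continuous map `f : M → Z` between Hausdorff spaces with Omega limit
set `Ω_f = ⋂_{K compact} closure (f '' (M \ K))`, the restriction of `f` over any subset
`A ⊆ Z \ Ω_f` is proper: preimages of compact subsets of `A` are compact. -/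
theorem omega_limit_restriction_proper {M Z : Type*} [TopologicalSpace M] [TopologicalSpace Z]
    [T2Space M] [T2Space Z] (f : M → Z) (hf : Continuous f) (A : Set Z)
    (hA : A ⊆ (⋂ (K : Set M) (_ : IsCompact K), closure (f '' Kᶜ))ᶜ) :
    ∀ C : Set Z, C ⊆ A → IsCompact C → IsCompact (f ⁻¹' C) := by
  intro C hCA hC
  -- For each z ∈ C, there is a compact K and an open neighborhood U of z with f ⁻¹' U ⊆ K.
  have key : ∀ z ∈ C, ∃ K : Set M, IsCompact K ∧ ∃ U : Set Z,
      IsOpen U ∧ z ∈ U ∧ f ⁻¹' U ⊆ K := by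
    intro z hz
    have hz' := hA (hCA hz)
    simp only [mem_compl_iff, mem_iInter, not_forall] at hz'
    obtain ⟨K, hK, hzK⟩ := hz'
    refine ⟨K, hK, (closure (f '' Kᶜ))ᶜ, isClosed_closure.isOpen_compl, hzK, ?_⟩
    intro x hx
    by_contra hxK
    exact hx (subset_closure ⟨x, hxK, rfl⟩)
  choose K hKc U hUopen hzU hUK using key
  obtain ⟨t, ht⟩ := hC.elim_nhds_subcover' (fun z hz => U z hz)
    (fun z hz => (hUopen z hz).mem_nhds (hzU z hz))
  have hclosed : IsClosed (f ⁻¹' C) := (hC.isClosed).preimage hf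
  have hsub : f ⁻¹' C ⊆ ⋃ z ∈ t, K z z.2 := by
    intro x hx
    obtain ⟨_, ⟨z, rfl⟩, _, ⟨hzt, rfl⟩, hxU⟩ := ht hx
    exact mem_biUnion hzt (hUK z z.2 hxU)
  exact (t.isCompact_biUnion (fun z _ => hKc z z.2)).of_isClosed_subset hclosed hsub
end

section
/- Every n-dimensional locally compact separable metric space admits a closed topological embedding into ℝ^{2n+2}. -/
/-!
Take a partition of unity subordinate to a fine open cover of order at most `n + 1` and send each
point to the corresponding convex combination of points of `ℝ^{2n+1}` in general position (any
`2n + 2` of them affinely independent). Two points with disjoint supports involve at most `2n + 2`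
of these points, so their images differ. Hence, for a compact exhaustion `(Kᵢ)` of `X`, the maps
that separate points of `Kᵢ` at distance at least `1 / (k + 1)` form a dense set in
`X →ᵇ ℝ^{2n+1}`, open by compactness of `Kᵢ`, and Baire's theorem yields a continuous injective
`g : X → ℝ^{2n+1}`. Appending a proper function `ρ : X → ℝ` as last coordinate makes `g` proper,
hence a closed embedding into `ℝ^{2n+2}`.
-/

open Set

/-- `CovDimLE X n`: the Lebesgue covering dimension of `X` is at most `n`, i.e. every open cover
admits an open refinement (still a cover) of order at most `n + 1`. -/
def CovDimLE (X : Type*) [TopologicalSpace X] (n : ℕ) : Prop :=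
  ∀ 𝒰 : Set (Set X), (∀ U ∈ 𝒰, IsOpen U) → ⋃₀ 𝒰 = univ →
    ∃ 𝒱 : Set (Set X), (∀ V ∈ 𝒱, IsOpen V) ∧ ⋃₀ 𝒱 = univ ∧
      (∀ V ∈ 𝒱, ∃ U ∈ 𝒰, V ⊆ U) ∧
      ∀ x : X, {V ∈ 𝒱 | x ∈ V}.encard ≤ (n : ℕ∞) + 1

open Module Topology
open scoped BoundedContinuousFunction

section AffineIndependence

variable {k V P ι : Type*} [DivisionRing k] [AddCommGroup V] [Module k V] [AddTorsor V P]

theorem affineSpan_image_ne_top_of_card_le (p : ι → P) {s : Finset ι}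
    (hs : s.card ≤ finrank k V) : affineSpan k (p '' s) ≠ ⊤ := by
  classical
  intro htop
  rcases s.eq_empty_or_nonempty with rfl | hne
  · simp at htop
  · have h := finrank_vectorSpan_image_finset_le k p s (Nat.sub_one_add_one hne.card_pos.ne').symm
    rw [Finset.coe_image, AffineSubspace.vectorSpan_eq_top_of_affineSpan_eq_top _ _ _ htop,
      finrank_top] at h
    have := hne.card_pos
    omega

theorem affineIndependent_of_forall_notMem_affineSpan [LinearOrder ι] {p : ι → P} {N : ℕ}
    (hp : ∀ i (s : Finset ι), (∀ j ∈ s, j < i) → s.card < N → p i ∉ affineSpan k (p '' s))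
    (s : Finset ι) (hs : s.card ≤ N) : AffineIndependent k (fun i : s => p i) := by
  classical
  induction s using Finset.induction_on_max with
  | empty => exact affineIndependent_of_subsingleton k _
  | insert i s hlt ih =>
    have his : i ∉ s := fun h => lt_irrefl i (hlt i h)
    rw [Finset.card_insert_of_notMem his] at hs
    have hmem : ∀ j : ↥(insert i s), (j : ι) ≠ i → (j : ι) ∈ s := fun j hj =>
      (Finset.mem_insert.1 j.2).resolve_left hj
    let i' : ↥(insert i s) := ⟨i, s.mem_insert_self i⟩
    let f : {j // j ≠ i'} ↪ s := ⟨fun j => ⟨j.1, hmem j.1 fun h => j.2 (Subtype.ext h)⟩,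
      fun a b h => Subtype.ext <| Subtype.ext <| by simpa using congrArg Subtype.val h⟩
    refine ((ih (by omega)).comp_embedding f).affineIndependent_of_notMem_span (i := i') fun hi =>
      hp i s hlt (by omega) (affineSpan_mono k ?_ hi)
    rintro _ ⟨j, hj, rfl⟩
    exact ⟨j, hmem j fun h => hj (Subtype.ext h), rfl⟩

end AffineIndependence

section GeneralPosition

variable {E : Type*} [NormedAddCommGroup E] [NormedSpace ℝ E] [FiniteDimensional ℝ E]

theorem AffineSubspace.isNowhereDense_of_ne_top {A : AffineSubspace ℝ E} (hA : A ≠ ⊤) :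
    IsNowhereDense (A : Set E) := by
  rw [A.closed_of_finiteDimensional.isNowhereDense_iff, ← not_nonempty_iff_eq_empty,
    A.convex.interior_nonempty_iff_affineSpan_eq_top, AffineSubspace.affineSpan_coe]
  exact hA

theorem exists_dist_lt_forall_notMem_affineSubspace {S : Set (AffineSubspace ℝ E)}
    (hS : S.Countable) (hS_top : ∀ A ∈ S, A ≠ ⊤) (c : E) {ε : ℝ} (hε : 0 < ε) :
    ∃ p, dist p c < ε ∧ ∀ A ∈ S, p ∉ A := by
  have hmeagre : IsMeagre (⋃ A ∈ S, (A : Set E)) := isMeagre_biUnion hS fun A hA =>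
    (AffineSubspace.isNowhereDense_of_ne_top (hS_top A hA)).isMeagre
  obtain ⟨p, hp, hpS⟩ := not_subset.1 fun h =>
    not_isMeagre_of_isOpen Metric.isOpen_ball (Metric.nonempty_ball.2 hε) (hmeagre.mono h)
  exact ⟨p, hp, fun A hA hpA => hpS (mem_biUnion hA hpA)⟩

theorem exists_seq_dist_lt_affineIndependent (c : ℕ → E) {ε : ℝ} (hε : 0 < ε) :
    ∃ Q : ℕ → E, (∀ m, dist (Q m) (c m) < ε) ∧
      ∀ s : Finset ℕ, s.card ≤ finrank ℝ E + 1 → AffineIndependent ℝ (fun i : s => Q i) := by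
  have step : ∀ m (P : ℕ → E), ∃ p, dist p (c m) < ε ∧
      ∀ s : Finset ℕ, s.card ≤ finrank ℝ E → p ∉ affineSpan ℝ (P '' s) := by
    intro m P
    obtain ⟨p, hpc, hp⟩ := exists_dist_lt_forall_notMem_affineSubspace
      ((Set.to_countable {s : Finset ℕ | s.card ≤ finrank ℝ E}).image
        fun s => affineSpan ℝ (P '' s))
      (by rintro _ ⟨s, hs, rfl⟩; exact affineSpan_image_ne_top_of_card_le P hs) (c m) hε
    exact ⟨p, hpc, fun s hs => hp _ ⟨s, hs, rfl⟩⟩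
  choose next hnext_dist hnext_notMem using step
  let Q : ℕ → E := fun m =>
    Nat.strongRec (fun m Q' => next m fun i => if h : i < m then Q' i h else 0) m
  have hQ : ∀ m, Q m = next m fun i => if i < m then Q i else 0 := fun m => by
    simp only [Q]
    rw [Nat.strongRec_eq]
    simp
  refine ⟨Q, fun m => hQ m ▸ hnext_dist m _,
    affineIndependent_of_forall_notMem_affineSpan fun m s hs hcard => ?_⟩
  rw [hQ m, ← image_congr fun i hi => if_pos (hs i hi)]
  exact hnext_notMem m _ s (by omega)

end GeneralPosition

theorem PartitionOfUnity.eq_of_finsum_smul_eq {ι X E : Type*} [DecidableEq ι] [TopologicalSpace X]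
    [AddCommGroup E] [Module ℝ E] {s : Set X} (φ : PartitionOfUnity ι X s) {Q : ι → E} {x y : X}
    (hx : x ∈ s) (hy : y ∈ s)
    (hQ : AffineIndependent ℝ (fun i : ↥(φ.finsupport x ∪ φ.finsupport y) => Q i))
    (h : ∑ᶠ i, φ i x • Q i = ∑ᶠ i, φ i y • Q i) (i : ι) : φ i x = φ i y := by
  set A := φ.finsupport x ∪ φ.finsupport y
  have hsum : ∀ z ∈ s, φ.finsupport z ⊆ A → ∑ j : A, φ j z = 1 ∧
      ∑ j : A, φ j z • Q j = ∑ᶠ j, φ j z • Q j := by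
    intro z hz hzA
    have hsupp : (Function.support fun j => φ j z • Q j) ⊆ A :=
      (Function.support_smul_subset_left _ _).trans
        ((φ.coe_finsupport z).symm.subset.trans (Finset.coe_subset.2 hzA))
    rw [Finset.sum_coe_sort A (fun j => φ j z), Finset.sum_coe_sort A (fun j => φ j z • Q j),
      φ.sum_finsupport' hz hzA, finsum_eq_sum_of_support_subset _ hsupp]
    exact ⟨rfl, rfl⟩
  by_cases hi : i ∈ A
  · obtain ⟨hx1, hxQ⟩ := hsum x hx Finset.subset_union_left
    obtain ⟨hy1, hyQ⟩ := hsum y hy Finset.subset_union_right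
    exact hQ.eq_of_sum_eq_sum (hx1.trans hy1.symm) (by rw [hxQ, hyQ, h]) ⟨i, hi⟩
      (Finset.mem_univ _)
  · simp only [A, Finset.mem_union, PartitionOfUnity.mem_finsupport, Function.mem_support,
      not_or, not_not] at hi
    rw [hi.1, hi.2]

theorem CovDimLE.exists_nat_refinement {X : Type*} [TopologicalSpace X] [SecondCountableTopology X]
    [Nonempty X] {n : ℕ} (hX : CovDimLE X n) {𝒰 : Set (Set X)} (h𝒰o : ∀ U ∈ 𝒰, IsOpen U)
    (h𝒰 : ⋃₀ 𝒰 = univ) :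
    ∃ V : ℕ → Set X, (∀ m, IsOpen (V m)) ∧ ⋃ m, V m = univ ∧ (∀ m, ∃ U ∈ 𝒰, V m ⊆ U) ∧
      ∀ x, {m | x ∈ V m}.encard ≤ n + 1 := by
  obtain ⟨𝒱, h𝒱o, h𝒱, h𝒱𝒰, h𝒱ord⟩ := hX 𝒰 h𝒰o h𝒰
  obtain ⟨𝒲, h𝒲c, h𝒲𝒱, h𝒲⟩ := TopologicalSpace.isOpen_sUnion_countable 𝒱 h𝒱o
  obtain ⟨e, he⟩ := Set.countable_iff_exists_injective.1 h𝒲c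
  obtain ⟨U₀, hU₀, -⟩ := mem_sUnion.1 (h𝒰 ▸ mem_univ (Classical.arbitrary X))
  set V : ℕ → Set X := Function.extend e Subtype.val fun _ => ∅
  have hVe : ∀ W, V (e W) = W := he.extend_apply _ _
  have hV : ∀ m, V m = ∅ ∨ ∃ W, e W = m := fun m => by
    by_cases hm : ∃ W, e W = m
    · exact Or.inr hm
    · exact Or.inl (Function.extend_apply' _ _ _ hm)
  refine ⟨V, fun m => ?_, ?_, fun m => ?_, fun x => ?_⟩
  · rcases hV m with h | ⟨W, rfl⟩
    · simp [h]
    · exact hVe W ▸ h𝒱o W (h𝒲𝒱 W.2)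
  · refine eq_univ_of_forall fun x => ?_
    obtain ⟨W, hW, hxW⟩ := mem_sUnion.1 (h𝒲.trans h𝒱 ▸ mem_univ x)
    exact mem_iUnion.2 ⟨e ⟨W, hW⟩, hVe ⟨W, hW⟩ ▸ hxW⟩
  · rcases hV m with h | ⟨W, rfl⟩
    · exact ⟨U₀, hU₀, h ▸ empty_subset _⟩
    · exact hVe W ▸ h𝒱𝒰 W (h𝒲𝒱 W.2)
  · calc {m | x ∈ V m}.encard ≤ (e '' {W | x ∈ (W : Set X)}).encard := by
          refine encard_le_encard fun m hm => ?_
          rcases hV m with h | ⟨W, rfl⟩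
          · simp [h] at hm
          · exact ⟨W, by simpa [hVe] using hm, rfl⟩
      _ = (Subtype.val '' {W : 𝒲 | x ∈ (W : Set X)}).encard := by
          rw [he.encard_image, Subtype.val_injective.encard_image]
      _ ≤ {V ∈ 𝒱 | x ∈ V}.encard := by
          refine encard_le_encard ?_
          rintro _ ⟨W, hW, rfl⟩
          exact ⟨h𝒲𝒱 W.2, hW⟩
      _ ≤ n + 1 := h𝒱ord x

theorem BoundedContinuousFunction.isOpen_setOf_forall_ne {X E : Type*} [TopologicalSpace X]
    [MetricSpace E] {D : Set (X × X)} (hD : IsCompact D) :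
    IsOpen {g : X →ᵇ E | ∀ p ∈ D, g p.1 ≠ g p.2} := by
  refine Metric.isOpen_iff.2 fun g hg => ?_
  obtain ⟨δ, hδ, hδD⟩ := hD.exists_forall_le' (f := fun p => dist (g p.1) (g p.2))
    (by fun_prop) fun p hp => dist_pos.2 (hg p hp)
  refine ⟨δ / 2, half_pos hδ, fun g' hg' p hp hgp => lt_irrefl δ ?_⟩
  rw [Metric.mem_ball, dist_comm] at hg'
  calc δ ≤ dist (g p.1) (g p.2) := hδD p hp
    _ ≤ dist (g p.1) (g' p.1) + dist (g' p.2) (g p.2) := by rw [hgp]; exact dist_triangle _ _ _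
    _ ≤ dist g g' + dist g' g := add_le_add (dist_coe_le_dist _) (dist_coe_le_dist _)
    _ < δ := by rw [dist_comm g']; linarith

section Approximation

variable {X E : Type*} [MetricSpace X] [NormedAddCommGroup E] [NormedSpace ℝ E]
  [FiniteDimensional ℝ E] {n : ℕ}

theorem CovDimLE.exists_continuous_dist_lt_ne [SecondCountableTopology X] (hX : CovDimLE X n)
    (hE : 2 * n + 1 ≤ finrank ℝ E) {h : X → E} (hh : Continuous h) {r ε : ℝ} (hr : 0 < r)
    (hε : 0 < ε) :
    ∃ g : X → E, Continuous g ∧ (∀ x, dist (g x) (h x) < r) ∧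
      ∀ x y, ε ≤ dist x y → g x ≠ g y := by
  rcases isEmpty_or_nonempty X with _ | _
  · exact ⟨h, hh, isEmptyElim, isEmptyElim⟩
  -- `R ≤ ε / 2` keeps points at distance `≥ ε` out of a common member of the cover.
  have hR : ∀ z, ∃ R, 0 < R ∧ R ≤ ε / 2 ∧ ∀ y ∈ Metric.ball z R, dist (h y) (h z) < r / 2 := by
    intro z
    obtain ⟨R, hR, hRh⟩ := Metric.continuous_iff.1 hh z (r / 2) (half_pos hr)
    exact ⟨min R (ε / 2), lt_min hR (half_pos hε), min_le_right _ _,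
      fun y hy => hRh y (hy.trans_le (min_le_left _ _))⟩
  choose R hR0 hRε hRh using hR
  obtain ⟨V, hVo, hV, hVR, hVord⟩ := hX.exists_nat_refinement
    (𝒰 := range fun z => Metric.ball z (R z)) (by rintro _ ⟨z, rfl⟩; exact Metric.isOpen_ball)
    (eq_univ_of_forall fun x => mem_sUnion.2 ⟨_, ⟨x, rfl⟩, Metric.mem_ball_self (hR0 x)⟩)
  have hzex : ∀ m, ∃ z, V m ⊆ Metric.ball z (R z) := fun m => by
    obtain ⟨_, ⟨z, rfl⟩, hVz⟩ := hVR m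
    exact ⟨z, hVz⟩
  choose z hz using hzex
  obtain ⟨φ, hφ⟩ := PartitionOfUnity.exists_isSubordinate isClosed_univ V hVo hV.symm.subset
  have hφV : ∀ m x, φ m x ≠ 0 → x ∈ V m := fun m x hx => hφ m (subset_closure hx)
  have hcard : ∀ x, (φ.finsupport x).card ≤ n + 1 := fun x => by
    have hsub : (φ.finsupport x : Set ℕ) ⊆ {m | x ∈ V m} := fun m hm =>
      hφV m x ((φ.mem_finsupport x).1 hm)
    have := (encard_le_encard hsub).trans (hVord x)
    rw [encard_coe_eq_coe_finsetCard] at this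
    exact_mod_cast this
  obtain ⟨Q, hQh, hQ⟩ := exists_seq_dist_lt_affineIndependent (fun m => h (z m)) (half_pos hr)
  refine ⟨fun x => ∑ᶠ m, φ m x • Q m, φ.continuous_finsum_smul fun m x _ => continuousAt_const,
    fun x => ?_, fun x y hxy hg => ?_⟩
  · refine (convex_ball (h x) r).finsum_mem (fun m => φ.nonneg m x) (φ.sum_eq_one (mem_univ x))
      fun m hm => ?_
    calc dist (Q m) (h x) ≤ dist (Q m) (h (z m)) + dist (h x) (h (z m)) := dist_triangle_right _ _ _
      _ < r / 2 + r / 2 := add_lt_add (hQh m) (hRh _ _ (hz m (hφV m x hm)))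
      _ = r := add_halves r
  · obtain ⟨m, hm⟩ : ∃ m, φ m x ≠ 0 := by
      by_contra! h0
      simpa [h0] using φ.sum_eq_one (mem_univ x)
    have hym : φ m y ≠ 0 :=
      φ.eq_of_finsum_smul_eq (mem_univ x) (mem_univ y) (hQ _ ?_) hg m ▸ hm
    · have hx := hz m (hφV m x hm)
      have hy := hz m (hφV m y hym)
      rw [Metric.mem_ball] at hx hy
      linarith [dist_triangle_right x y (z m), hRε (z m)]
    · have := Finset.card_union_le (φ.finsupport x) (φ.finsupport y)
      linarith [hcard x, hcard y]

theorem CovDimLE.dense_setOf_ne_of_le_dist [SecondCountableTopology X] (hX : CovDimLE X n)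
    (hE : 2 * n + 1 ≤ finrank ℝ E) {ε : ℝ} (hε : 0 < ε) : Dense {g : X →ᵇ E | ∀ x y, ε ≤ dist x y → g x ≠ g y} := by
  refine Metric.dense_iff.2 fun h r hr => ?_
  obtain ⟨g, hgc, hgh, hg⟩ := hX.exists_continuous_dist_lt_ne hE h.continuous (half_pos hr) hε
  obtain ⟨C, hC⟩ := h.bounded
  let g' : X →ᵇ E := .mkOfBound ⟨g, hgc⟩ (r + C) fun x y => by
    change dist (g x) (g y) ≤ r + C
    have := dist_triangle4 (g x) (h x) (h y) (g y)
    linarith [hgh x, hgh y, hC x y, dist_comm (h y) (g y)]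
  refine ⟨g', Metric.mem_ball.2 ?_, hg⟩
  exact ((BoundedContinuousFunction.dist_le (half_pos hr).le).2 fun x => (hgh x).le).trans_lt
    (half_lt_self hr)

theorem CovDimLE.exists_continuous_injective [SigmaCompactSpace X] (hX : CovDimLE X n)
    (hE : 2 * n + 1 ≤ finrank ℝ E) : ∃ g : X → E, Continuous g ∧ Function.Injective g := by
  let D : ℕ × ℕ → Set (X × X) := fun ik =>
    compactCovering X ik.1 ×ˢ compactCovering X ik.1 ∩ {p | 1 / (ik.2 + 1 : ℝ) ≤ dist p.1 p.2}
  have hD : ∀ ik, IsCompact (D ik) := fun ik =>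
    ((isCompact_compactCovering X ik.1).prod (isCompact_compactCovering X ik.1)).inter_right
      (isClosed_le continuous_const continuous_dist)
  have hdense : ∀ ik, Dense {g : X →ᵇ E | ∀ p ∈ D ik, g p.1 ≠ g p.2} := fun ik => by
    refine (hX.dense_setOf_ne_of_le_dist hE (by positivity : (0 : ℝ) < 1 / (ik.2 + 1))).mono ?_
    exact fun g hg p hp => hg p.1 p.2 hp.2
  obtain ⟨g, hg⟩ := (dense_iInter_of_isOpen
    (fun ik => BoundedContinuousFunction.isOpen_setOf_forall_ne (hD ik)) hdense).nonempty
  refine ⟨g, g.continuous, fun x y hxy => by_contra fun hne => ?_⟩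
  obtain ⟨i, hi⟩ := exists_mem_compactCovering x
  obtain ⟨j, hj⟩ := exists_mem_compactCovering y
  obtain ⟨k, hk⟩ := exists_nat_one_div_lt (dist_pos.2 hne)
  exact mem_iInter.1 hg (max i j, k) (x, y)
    ⟨⟨compactCovering_subset X (le_max_left i j) hi,
      compactCovering_subset X (le_max_right i j) hj⟩, hk.le⟩ hxy

end Approximation

theorem exists_isProperMap_real (X : Type*) [TopologicalSpace X] [T2Space X]
    [LocallyCompactSpace X] [SigmaCompactSpace X] : ∃ ρ : X → ℝ, IsProperMap ρ := by
  let K := CompactExhaustion.choice X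
  have hu : ∀ i, ∃ u : C(X, ℝ), EqOn u 0 (K i) ∧ EqOn u 1 (interior (K (i + 1)))ᶜ ∧
      ∀ x, u x ∈ Icc (0 : ℝ) 1 := fun i =>
    exists_continuous_zero_one_of_isCompact (K.isCompact i) isOpen_interior.isClosed_compl
      (disjoint_compl_right_iff_subset.2 (K.subset_interior_succ i))
  choose u hu0 hu1 hu01 using hu
  have hlf : LocallyFinite fun i => Function.support (u i) := fun x =>
    ⟨interior (K (K.find x + 1)),
      isOpen_interior.mem_nhds (K.subset_interior_succ _ (K.mem_find x)),
      (finite_lt_nat (K.find x + 1)).subset fun i ⟨y, hy, hyK⟩ => not_le.1 fun hi =>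
        hy (hu0 i (K.subset hi (interior_subset hyK)))⟩
  have hρc : Continuous fun x => ∑ᶠ i, u i x := continuous_finsum (fun i => (u i).continuous) hlf
  -- outside `K (j + 1)` the first `j + 1` bumps are all equal to `1`
  have hρ : ∀ j x, x ∉ K (j + 1) → (j + 1 : ℝ) ≤ ∑ᶠ i, u i x := by
    intro j x hx
    have hfin := hlf.point_finite x
    calc (j + 1 : ℝ) = ∑ i ∈ Finset.range (j + 1), u i x := by
          rw [Finset.sum_congr rfl fun i hi => hu1 i fun hxi =>
            hx (K.subset (Finset.mem_range.1 hi) (interior_subset hxi))]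
          simp
      _ ≤ ∑ i ∈ Finset.range (j + 1) ∪ hfin.toFinset, u i x :=
          Finset.sum_le_sum_of_subset_of_nonneg Finset.subset_union_left
            fun i _ _ => (hu01 i x).1
      _ = ∑ᶠ i, u i x := (finsum_eq_sum_of_support_subset _ fun i hi =>
          Finset.mem_coe.2 (Finset.mem_union_right _ (hfin.mem_toFinset.2 hi))).symm
  refine ⟨_, isProperMap_iff_isCompact_preimage.2 ⟨hρc, fun C hC => ?_⟩⟩
  obtain ⟨M, hM⟩ := hC.bddAbove
  refine (K.isCompact (⌈M⌉₊ + 1)).of_isClosed_subset (hC.isClosed.preimage hρc)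
    fun x hx => by_contra fun hxK => ?_
  linarith [hρ _ x hxK, hM hx, Nat.le_ceil M]

theorem IsProperMap.isClosedEmbedding_prodMk {X Y Z : Type*} [TopologicalSpace X]
    [TopologicalSpace Y] [TopologicalSpace Z] [T2Space Y] [T2Space Z] {g : X → Y} {ρ : X → Z}
    (hρ : IsProperMap ρ) (hg : Continuous g) (hinj : Function.Injective g) :
    IsClosedEmbedding fun x => (g x, ρ x) := by
  have hF : IsProperMap fun x => (g x, ρ x) :=
    isProperMap_of_comp_of_t2 (hg.prodMk hρ.continuous) continuous_snd hρ
  exact .of_continuous_injective_isClosedMap hF.continuous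
    (fun x y h => hinj (congrArg Prod.fst h)) hF.isClosedMap

/-- Every `n`-dimensional locally compact separable metric space admits a closed
topological embedding into `ℝ^{2n+2}`. -/
theorem closedEmbedding_euclidean_of_locallyCompact {X : Type*} [MetricSpace X]
    [TopologicalSpace.SeparableSpace X] [LocallyCompactSpace X] (n : ℕ)
    (hdim : CovDimLE X n ∧ ∀ m, CovDimLE X m → n ≤ m) :
    ∃ f : X → EuclideanSpace ℝ (Fin (2 * n + 2)), Topology.IsClosedEmbedding f := by
  obtain ⟨g, hgc, hginj⟩ :=
    hdim.1.exists_continuous_injective (E := EuclideanSpace ℝ (Fin (2 * n + 1))) (by simp)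
  obtain ⟨ρ, hρ⟩ := exists_isProperMap_real X
  let e : (EuclideanSpace ℝ (Fin (2 * n + 1)) × ℝ) ≃L[ℝ] EuclideanSpace ℝ (Fin (2 * n + 2)) :=
    .ofFinrankEq (by simp)
  exact ⟨e ∘ fun x => (g x, ρ x),
    e.toHomeomorph.isClosedEmbedding.comp (hρ.isClosedEmbedding_prodMk hgc hginj)⟩
end
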